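/- arXiv:2603.01551 — 2 statements merged into one kernel-verified Lean document; each statement's English description precedes it below -/
import Mathlib

section
/- Let n ∈ ℕ and let R, H, Ω : ℝ → Matrix (Fin n) (Fin n) ℝ with R and H differentiable and R(t) orthogonal (R(t)·R(t)ᵀ = 1) for every t. Define the spin ω(t) := R'(t)·R(t)ᵀ + R(t)·Ω(t)·R(t)ᵀ and h(t) := R(t)·H(t)·R(t)ᵀ. Then for every t: h'(t) + h(t)·ω(t) − ω(t)·h(t) = R(t)·(H'(t) + H(t)·Ω(t) − Ω(t)·H(t))·R(t)ᵀ (the corotational rates of h and H associated with the spins ω and Ω are objective counterparts of each other). -/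
open Matrix

/-!
Write `W = R'Rᵀ` for the spin of `R`. Differentiating `R Rᵀ = 1` shows that `W` is
skew, `R R'ᵀ = -W`, so the product rule gives `h' = W h - h W + R H' Rᵀ`. Since
`ω = W + R Ω Rᵀ` and conjugation by an orthogonal matrix is multiplicative, the
commutator `h ω - ω h` equals `h W - W h + R (H Ω - Ω H) Rᵀ`, and the `W`-terms cancel.
-/

/-- Entrywise derivative of a matrix-valued function of a real variable. -/
noncomputable def matDeriv {n : ℕ} (A : ℝ → Matrix (Fin n) (Fin n) ℝ) (t : ℝ) :
    Matrix (Fin n) (Fin n) ℝ :=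
  Matrix.of fun i j => deriv (fun s => A s i j) t

theorem Matrix.conj_mul_conj {l m α : Type*} [Fintype l] [Fintype m] [DecidableEq m]
    [Semiring α] {R : Matrix l m α} (hR : Rᵀ * R = 1) (X Y : Matrix m m α) :
    R * X * Rᵀ * (R * Y * Rᵀ) = R * (X * Y) * Rᵀ := by
  simp only [Matrix.mul_assoc, ← Matrix.mul_assoc Rᵀ R, hR, Matrix.one_mul]

section MatDeriv

variable {n : ℕ} {A B : ℝ → Matrix (Fin n) (Fin n) ℝ} {t : ℝ}

theorem differentiableAt_mul_apply
    (hA : ∀ i j, DifferentiableAt ℝ (fun s => A s i j) t)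
    (hB : ∀ i j, DifferentiableAt ℝ (fun s => B s i j) t) (i j : Fin n) :
    DifferentiableAt ℝ (fun s => (A s * B s) i j) t := by
  simp only [mul_apply]
  exact DifferentiableAt.fun_sum fun k _ => (hA i k).mul (hB k j)

theorem matDeriv_mul
    (hA : ∀ i j, DifferentiableAt ℝ (fun s => A s i j) t)
    (hB : ∀ i j, DifferentiableAt ℝ (fun s => B s i j) t) :
    matDeriv (fun s => A s * B s) t = matDeriv A t * B t + A t * matDeriv B t := by
  ext i j
  simp only [matDeriv, of_apply, Matrix.add_apply, mul_apply]
  rw [deriv_fun_sum fun k _ => (hA i k).fun_mul (hB k j), ← Finset.sum_add_distrib]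
  exact Finset.sum_congr rfl fun k _ => deriv_fun_mul (hA i k) (hB k j)

theorem matDeriv_transpose : matDeriv (fun s => (A s)ᵀ) t = (matDeriv A t)ᵀ := by
  ext i j
  simp [matDeriv]

theorem matDeriv_const (M : Matrix (Fin n) (Fin n) ℝ) : matDeriv (fun _ => M) t = 0 := by
  ext i j
  simp [matDeriv]

theorem matDeriv_mul_transpose_add_eq_zero {R : ℝ → Matrix (Fin n) (Fin n) ℝ}
    (hR : ∀ i j, DifferentiableAt ℝ (fun s => R s i j) t) (horth : ∀ s, R s * (R s)ᵀ = 1) :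
    matDeriv R t * (R t)ᵀ + R t * (matDeriv R t)ᵀ = 0 := by
  have hRRt := matDeriv_mul (B := fun s => (R s)ᵀ) hR fun i j => hR j i
  rwa [matDeriv_transpose, funext horth, matDeriv_const, eq_comm] at hRRt

theorem matDeriv_conj {R H : ℝ → Matrix (Fin n) (Fin n) ℝ}
    (hR : ∀ i j, DifferentiableAt ℝ (fun s => R s i j) t)
    (hH : ∀ i j, DifferentiableAt ℝ (fun s => H s i j) t) (horth : ∀ s, R s * (R s)ᵀ = 1) :
    matDeriv (fun s => R s * H s * (R s)ᵀ) t =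
      matDeriv R t * (R t)ᵀ * (R t * H t * (R t)ᵀ) - R t * H t * (R t)ᵀ * (matDeriv R t * (R t)ᵀ)
        + R t * matDeriv H t * (R t)ᵀ := by
  have hRtR : (R t)ᵀ * R t = 1 := mul_eq_one_comm.mp (horth t)
  have hskew : R t * (matDeriv R t)ᵀ = -(matDeriv R t * (R t)ᵀ) :=
    eq_neg_of_add_eq_zero_right (matDeriv_mul_transpose_add_eq_zero hR horth)
  rw [matDeriv_mul (B := fun s => (R s)ᵀ) (differentiableAt_mul_apply hR hH) fun i j => hR j i,
    matDeriv_mul hR hH, matDeriv_transpose]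
  calc (matDeriv R t * H t + R t * matDeriv H t) * (R t)ᵀ + R t * H t * (matDeriv R t)ᵀ
      = matDeriv R t * ((R t)ᵀ * R t) * H t * (R t)ᵀ + R t * matDeriv H t * (R t)ᵀ
          + R t * H t * ((R t)ᵀ * R t) * (matDeriv R t)ᵀ := by
        simp only [hRtR, Matrix.mul_one, Matrix.add_mul]
    _ = _ := by
        simp only [Matrix.mul_assoc, hskew, Matrix.mul_neg]
        abel

end MatDeriv

/-- Proposition 2.2 (sufficiency): if `ω = R'Rᵀ + R·Ω·Rᵀ`, then the corotational
rates of `h = R·H·Rᵀ` and `H` associated with the spins `ω` and `Ω` are objective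
counterparts of each other. -/
theorem corotational_rate_objective_counterpart {n : ℕ}
    (R H Ω : ℝ → Matrix (Fin n) (Fin n) ℝ)
    (hR : ∀ t, ∀ i j, DifferentiableAt ℝ (fun s => R s i j) t)
    (hH : ∀ t, ∀ i j, DifferentiableAt ℝ (fun s => H s i j) t)
    (horth : ∀ t, R t * (R t)ᵀ = 1) :
    ∀ t : ℝ,
      let ω : Matrix (Fin n) (Fin n) ℝ :=
        matDeriv R t * (R t)ᵀ + R t * Ω t * (R t)ᵀ
      let h : ℝ → Matrix (Fin n) (Fin n) ℝ := fun s => R s * H s * (R s)ᵀ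
      matDeriv h t + h t * ω - ω * h t =
        R t * (matDeriv H t + H t * Ω t - Ω t * H t) * (R t)ᵀ := by
  intro t ω h
  have hRtR : (R t)ᵀ * R t = 1 := mul_eq_one_comm.mp (horth t)
  have hcomm : h t * ω - ω * h t =
      h t * (matDeriv R t * (R t)ᵀ) - matDeriv R t * (R t)ᵀ * h t
        + R t * (H t * Ω t - Ω t * H t) * (R t)ᵀ := by
    simp only [ω, h, Matrix.mul_add, Matrix.add_mul, conj_mul_conj hRtR, Matrix.mul_sub,
      Matrix.sub_mul]
    abel
  rw [add_sub_assoc, hcomm, matDeriv_conj (hR t) (hH t) horth]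
  simp only [Matrix.mul_add, Matrix.add_mul, Matrix.mul_sub, Matrix.sub_mul]
  abel
end

section
/- Let μ, α ∈ ℝ and n ∈ ℝ with n ≠ 0. Define f_n : ℝ → ℝ by f_n(λ) := (λ^n − λ^(−n)) / (2n) (real powers of positive reals), and the 2×2 real matrices P₁ := (1/2) • ![![1, 1], ![1, 1]], P₂ := (1/2) • ![![1, −1], ![−1, 1]]. Then 2μ • (f_n(exp α) • P₁ + f_n(exp(−α)) • P₂) = ((μ/n)·(exp(n·α) − exp(−n·α))) • ![![0, 1], ![1, 0]]. In particular the Cauchy stress of the two-power Ogden (Bažant–Itskov) model under LFSS deformation is an Eulerian pure shear stress with s(α) = (μ/n)(e^(nα) − e^(−nα)). -/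
/-!
Writing `s = e^(nα) − e^(−nα)`, the scale function takes the values `f_n(e^α) = s / (2n)` and,
being odd under `λ ↦ λ⁻¹`, `f_n(e^(−α)) = −s / (2n)`. The strain is therefore
`(s / (2n)) • (P₁ − P₂)`, and `P₁ − P₂` is the pure shear matrix `!![0, 1; 1, 0]`.
-/

open Matrix Real

noncomputable def bazantItskov (n lam : ℝ) : ℝ := (lam ^ n - lam ^ (-n)) / (2 * n)

lemma bazantItskov_inv (n : ℝ) {lam : ℝ} (hlam : 0 ≤ lam) :
    bazantItskov n lam⁻¹ = -bazantItskov n lam := by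
  simp only [bazantItskov, inv_rpow hlam, rpow_neg hlam, inv_inv]
  ring

lemma bazantItskov_exp (n α : ℝ) :
    bazantItskov n (exp α) = (exp (n * α) - exp (-(n * α))) / (2 * n) := by
  rw [bazantItskov, ← exp_mul, ← exp_mul, mul_comm α, mul_neg, mul_comm α]

lemma smul_add_neg_smul_eigenprojections (c : ℝ) :
    c • ((1 / 2 : ℝ) • !![1, 1; 1, 1]) + (-c) • ((1 / 2 : ℝ) • !![1, -1; -1, 1]) =
      c • (!![0, 1; 1, 0] : Matrix (Fin 2) (Fin 2) ℝ) := by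
  rw [neg_smul, ← sub_eq_add_neg, ← smul_sub, ← smul_sub]
  congr 1
  ext i j
  fin_cases i <;> fin_cases j <;> norm_num

theorem two_power_ogden_lfss_pure_shear_general (μ α n : ℝ) :
    let f_n : ℝ → ℝ := fun lam => (lam ^ n - lam ^ (-n)) / (2*n)
    let P₁ : Matrix (Fin 2) (Fin 2) ℝ := (1/2 : ℝ) • !![1, 1; 1, 1]
    let P₂ : Matrix (Fin 2) (Fin 2) ℝ := (1/2 : ℝ) • !![1, -1; -1, 1]
    (2*μ) • (f_n (Real.exp α) • P₁ + f_n (Real.exp (-α)) • P₂) =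
      ((μ/n) * (Real.exp (n*α) - Real.exp (-(n*α)))) • !![0, 1; 1, 0] := by
  show (2 * μ) • (bazantItskov n (exp α) • _ + bazantItskov n (exp (-α)) • _) = _
  rw [exp_neg, bazantItskov_inv n (exp_pos α).le, smul_add_neg_smul_eigenprojections, smul_smul,
    bazantItskov_exp]
  congr 1
  ring

/-- Eqs. (4-30)–(4-31): for the two-power Ogden (Bažant–Itskov) model, LFSS
deformation leads to an Eulerian pure shear stress with
`s(α) = (μ/n)(e^(nα) − e^(−nα))`. -/
theorem two_power_ogden_lfss_pure_shear (μ α n : ℝ) (hn : n ≠ 0) :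
    let f_n : ℝ → ℝ := fun lam => (lam ^ n - lam ^ (-n)) / (2*n)
    let P₁ : Matrix (Fin 2) (Fin 2) ℝ := (1/2 : ℝ) • !![1, 1; 1, 1]
    let P₂ : Matrix (Fin 2) (Fin 2) ℝ := (1/2 : ℝ) • !![1, -1; -1, 1]
    (2*μ) • (f_n (Real.exp α) • P₁ + f_n (Real.exp (-α)) • P₂) =
      ((μ/n) * (Real.exp (n*α) - Real.exp (-(n*α)))) • !![0, 1; 1, 0] :=
  two_power_ogden_lfss_pure_shear_general μ α n
end
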